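/- For every (α, β + ix) ∈ 𝒢, the pair h(α, β + ix) = (α₁, α₂) satisfies the defining conditions of the period domain Gr^{po}_{2,2}: α₁² = 0, α₂² = 0, α₁·α₂ = 0, α₁·(conjugate of α₁) > 0, and α₂·(conjugate of α₂) > 0. -/

import Mathlib

/- Context: `V` is a finite-dimensional real vector space with a nondegenerate symmetric
bilinear form `B` of signature `(3, dim V − 3)`.  We model the complexification `V_ℂ`
by pairs `(a, b) : V × V` representing `a + i·b`. -/

noncomputable section

/-- The ℂ-bilinear extension of `B` to `V × V`, where `(a, b)` represents `a + i·b`. -/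
def Bc {V : Type*} [AddCommGroup V] [Module ℝ V] (B : LinearMap.BilinForm ℝ V)
    (y z : V × V) : ℂ :=
  ⟨B y.1 z.1 - B y.2 z.2, B y.1 z.2 + B y.2 z.1⟩

/-- The inclusion of `V` into its complexification `V × V`. -/
def toC {V : Type*} [AddCommGroup V] (z : V) : V × V := (z, 0)

/-- Complex conjugation on the complexification `V × V`. -/
def conjC {V : Type*} [AddCommGroup V] (y : V × V) : V × V := (y.1, -y.2)

/-- Scalar multiplication by a complex number on the complexification `V × V`. -/
def cSMul {V : Type*} [AddCommGroup V] [Module ℝ V] (s : ℂ) (y : V × V) : V × V :=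
  (s.re • y.1 - s.im • y.2, s.im • y.1 + s.re • y.2)

/-- The (symmetric, nondegenerate) form `B` has signature `(3, dim V − 3)`: `V` splits as an
orthogonal direct sum of a 3-dimensional positive definite subspace and a negative definite
complement. -/
def IsSigThree {V : Type*} [AddCommGroup V] [Module ℝ V] (B : LinearMap.BilinForm ℝ V) : Prop :=
  ∃ P N : Submodule ℝ V, IsCompl P N ∧ Module.finrank ℝ P = 3 ∧
    (∀ x ∈ P, ∀ y ∈ N, B x y = 0) ∧
    (∀ x ∈ P, x ≠ 0 → 0 < B x x) ∧ (∀ y ∈ N, y ≠ 0 → B y y < 0)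

/-- The period domain `𝒢`: pairs `(α, β + i·x)` with `α² = 0`, `α·ᾱ > 0`, `α·x = 0`, `x² > 0`.
A point is `p = (α, (β, x))` where `α : V × V` is a complexified vector and `β, x ∈ V`. -/
def periodDomain {V : Type*} [AddCommGroup V] [Module ℝ V] (B : LinearMap.BilinForm ℝ V) :
    Set ((V × V) × (V × V)) :=
  {p | Bc B p.1 p.1 = 0 ∧ 0 < (Bc B p.1 (conjC p.1)).re ∧
       Bc B p.1 (toC p.2.2) = 0 ∧ 0 < B p.2.2 p.2.2}

/- Enlargement `V̂ = V ⊕ ℝw ⊕ ℝw*` of `V` by a hyperbolic plane `U(n)`: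
we model `V̂` as `V × ℝ × ℝ` with `w = (0, 1, 0)` and `w* = (0, 0, 1)`. -/

/-- The bilinear form of `V̂`: it restricts to `B` on `V`, satisfies `w² = (w*)² = 0`,
`w·w* = n`, and `w, w*` are orthogonal to `V`. -/
def Bhat {V : Type*} [AddCommGroup V] [Module ℝ V] (B : LinearMap.BilinForm ℝ V) (n : ℝ) :
    LinearMap.BilinForm ℝ (V × ℝ × ℝ) :=
  LinearMap.mk₂ ℝ (fun y z => B y.1 z.1 + n * (y.2.1 * z.2.2 + y.2.2 * z.2.1))
    (fun m₁ m₂ z => by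
      simp only [Prod.fst_add, Prod.snd_add, map_add, LinearMap.add_apply]; ring)
    (fun c m z => by
      simp only [Prod.smul_fst, Prod.smul_snd, map_smul, LinearMap.smul_apply,
        smul_eq_mul]; ring)
    (fun m z₁ z₂ => by
      simp only [Prod.fst_add, Prod.snd_add, map_add, LinearMap.add_apply]; ring)
    (fun c m z => by
      simp only [Prod.smul_fst, Prod.smul_snd, map_smul, LinearMap.smul_apply,
        smul_eq_mul]; ring)

/-- The basis vector `w` of the added hyperbolic plane. -/
def wHat (V : Type*) [AddCommGroup V] : V × ℝ × ℝ := (0, 1, 0)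

/-- The basis vector `w*` of the added hyperbolic plane. -/
def wsHat (V : Type*) [AddCommGroup V] : V × ℝ × ℝ := (0, 0, 1)

/-- The ℂ-linear embedding of the complexification of `V` into that of `V̂`. -/
def jC {V : Type*} [AddCommGroup V] (y : V × V) : (V × ℝ × ℝ) × (V × ℝ × ℝ) :=
  ((y.1, 0, 0), (y.2, 0, 0))

/-- The map `h(α, β + ix) = (√n·α − (α·β)·w, √n·β + ½(x² − β²)·w + w* + i(√n·x − (x·β)·w))`
from `𝒢` into the complexification of `V̂`. -/
def hmap {V : Type*} [AddCommGroup V] [Module ℝ V] (B : LinearMap.BilinForm ℝ V) (n : ℝ)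
    (p : (V × V) × (V × V)) : ((V × ℝ × ℝ) × (V × ℝ × ℝ)) × ((V × ℝ × ℝ) × (V × ℝ × ℝ)) :=
  (Real.sqrt n • jC p.1 - cSMul (Bc B p.1 (toC p.2.1)) (toC (wHat V)),
   (Real.sqrt n • (p.2.1, (0 : ℝ), (0 : ℝ)) +
      ((B p.2.2 p.2.2 - B p.2.1 p.2.1) / 2) • wHat V + wsHat V,
    Real.sqrt n • (p.2.2, (0 : ℝ), (0 : ℝ)) - (B p.2.2 p.2.1) • wHat V))

/-! Since `w` is isotropic and orthogonal to `V`, and `w·w* = n`, every condition on `h(α, β + ix)`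
reduces to one on `(α, β + ix)`: `α₁² = n α²`, `α₁·α₂ = i n (α·x)`, `α₁·ᾱ₁ = n (α·ᾱ)` and
`α₂·ᾱ₂ = 2n x²`, while `α₂² = n ((β + ix)² + 2c) = 0` because the `w`-coefficient of `α₂` is
`c = -½ (β + ix)²`. -/

section HyperbolicEnlargement

variable {V : Type*} [AddCommGroup V] [Module ℝ V] (B : LinearMap.BilinForm ℝ V)

@[simp]
lemma Bc_re (y z : V × V) : (Bc B y z).re = B y.1 z.1 - B y.2 z.2 := rfl

@[simp]
lemma Bc_im (y z : V × V) : (Bc B y z).im = B y.1 z.2 + B y.2 z.1 := rfl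

@[simp]
lemma Bhat_apply (n : ℝ) (v₁ v₂ : V) (s₁ t₁ s₂ t₂ : ℝ) :
    Bhat B n (v₁, s₁, t₁) (v₂, s₂, t₂) = B v₁ v₂ + n * (s₁ * t₂ + t₁ * s₂) := rfl

lemma hmap_fst (n : ℝ) (α : V × V) (β x : V) :
    (hmap B n (α, β, x)).1 =
      ((√n • α.1, -B α.1 β, 0), (√n • α.2, -B α.2 β, 0)) := by
  simp [hmap, jC, cSMul, toC, wHat]

lemma hmap_snd (n : ℝ) (α : V × V) (β x : V) :
    (hmap B n (α, β, x)).2 =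
      ((√n • β, (B x x - B β β) / 2, 1), (√n • x, -B x β, 0)) := by
  simp [hmap, wHat, wsHat]

variable {n : ℝ} (hn : 0 ≤ n) (α : V × V) (β x : V)
include hn

lemma Bc_Bhat_hmap_fst_self :
    Bc (Bhat B n) (hmap B n (α, β, x)).1 (hmap B n (α, β, x)).1 = n * Bc B α α := by
  rw [hmap_fst]
  apply Complex.ext <;> simp [← mul_assoc, Real.mul_self_sqrt hn] <;> ring

lemma Bc_Bhat_hmap_snd_self (hsymm : ∀ y z : V, B y z = B z y) :
    Bc (Bhat B n) (hmap B n (α, β, x)).2 (hmap B n (α, β, x)).2 = 0 := by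
  rw [hmap_snd]
  apply Complex.ext <;> simp [← mul_assoc, Real.mul_self_sqrt hn, hsymm β x]
  ring

lemma Bc_Bhat_hmap_fst_snd :
    Bc (Bhat B n) (hmap B n (α, β, x)).1 (hmap B n (α, β, x)).2 =
      n * Complex.I * Bc B α (toC x) := by
  rw [hmap_fst, hmap_snd]
  apply Complex.ext <;> simp [toC, ← mul_assoc, Real.mul_self_sqrt hn]

lemma Bc_Bhat_hmap_fst_conj_re :
    (Bc (Bhat B n) (hmap B n (α, β, x)).1 (conjC (hmap B n (α, β, x)).1)).re =
      n * (Bc B α (conjC α)).re := by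
  rw [hmap_fst]
  simp [conjC, ← mul_assoc, Real.mul_self_sqrt hn]
  ring

lemma Bc_Bhat_hmap_snd_conj_re :
    (Bc (Bhat B n) (hmap B n (α, β, x)).2 (conjC (hmap B n (α, β, x)).2)).re =
      2 * n * B x x := by
  rw [hmap_snd]
  simp [conjC, ← mul_assoc, Real.mul_self_sqrt hn]
  ring

end HyperbolicEnlargement

theorem statement6_general {V : Type*} [NormedAddCommGroup V] [NormedSpace ℝ V]
    (B : LinearMap.BilinForm ℝ V)
    (hsymm : ∀ x y : V, B x y = B y x)
    (n : ℕ) (hn : 0 < n)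
    (p : (V × V) × (V × V)) (hp : p ∈ periodDomain B) :
    Bc (Bhat B n) (hmap B n p).1 (hmap B n p).1 = 0 ∧
    Bc (Bhat B n) (hmap B n p).2 (hmap B n p).2 = 0 ∧
    Bc (Bhat B n) (hmap B n p).1 (hmap B n p).2 = 0 ∧
    0 < (Bc (Bhat B n) (hmap B n p).1 (conjC (hmap B n p).1)).re ∧
    0 < (Bc (Bhat B n) (hmap B n p).2 (conjC (hmap B n p).2)).re := by
  obtain ⟨α, β, x⟩ := p
  obtain ⟨hαα, hααbar, hαx, hxx⟩ := hp
  have hn' : (0 : ℝ) < n := Nat.cast_pos.mpr hn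
  rw [Bc_Bhat_hmap_fst_self B hn'.le, Bc_Bhat_hmap_snd_self B hn'.le _ _ _ hsymm,
    Bc_Bhat_hmap_fst_snd B hn'.le, Bc_Bhat_hmap_fst_conj_re B hn'.le,
    Bc_Bhat_hmap_snd_conj_re B hn'.le, hαα, hαx]
  exact ⟨mul_zero _, rfl, mul_zero _, mul_pos hn' hααbar, mul_pos (mul_pos two_pos hn') hxx⟩

/-- For every `(α, β + ix) ∈ 𝒢`, the pair `h(α, β + ix) = (α₁, α₂)`
satisfies the defining conditions of the period domain `Gr^{po}_{2,2}`:
`α₁² = 0`, `α₂² = 0`, `α₁·α₂ = 0`, `α₁·ᾱ₁ > 0`, `α₂·ᾱ₂ > 0`. -/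
theorem statement6 {V : Type*} [NormedAddCommGroup V] [NormedSpace ℝ V] [FiniteDimensional ℝ V]
    (B : LinearMap.BilinForm ℝ V)
    (hsymm : ∀ x y : V, B x y = B y x)
    (hnd : ∀ x : V, (∀ y : V, B x y = 0) → x = 0)
    (hsig : IsSigThree B)
    (n : ℕ) (hn : 0 < n)
    (p : (V × V) × (V × V)) (hp : p ∈ periodDomain B) :
    Bc (Bhat B n) (hmap B n p).1 (hmap B n p).1 = 0 ∧
    Bc (Bhat B n) (hmap B n p).2 (hmap B n p).2 = 0 ∧
    Bc (Bhat B n) (hmap B n p).1 (hmap B n p).2 = 0 ∧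
    0 < (Bc (Bhat B n) (hmap B n p).1 (conjC (hmap B n p).1)).re ∧
    0 < (Bc (Bhat B n) (hmap B n p).2 (conjC (hmap B n p).2)).re :=
  statement6_general B hsymm n hn p hp
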